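/- arXiv:2605.11801 — 2 statements merged into one kernel-verified Lean document; each statement's English description precedes it below -/
import Mathlib

section
/- Let γ ∈ (0,1), K a bounded γ-Hölder probability density on ℝ^d, and F : ℝ → ℝ with F′ bounded and Lipschitz (equivalently, F ∈ C² with F′, F″ bounded suffices). Then there exists C depending on F and K such that for all bounded γ-Hölder functions f, g ∈ L¹(ℝ^d): ‖F(K*f) − F(K*g)‖_{C^γ} ≤ C (1 + ‖f+g‖_{L¹}) ‖f − g‖_{C^γ}. -/
open MeasureTheory Real Filter

abbrev Euc (d : ℕ) := EuclideanSpace ℝ (Fin d)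

noncomputable def supN {E : Type*} (f : E → ℝ) : ℝ := ⨆ x, |f x|

noncomputable def holdS {E : Type*} [NormedAddCommGroup E] (γ : ℝ) (f : E → ℝ) : ℝ :=
  ⨆ p : E × E, |f p.1 - f p.2| / ‖p.1 - p.2‖ ^ γ

noncomputable def cNorm {E : Type*} [NormedAddCommGroup E] (γ : ℝ) (f : E → ℝ) : ℝ :=
  supN f + holdS γ f

def IsHolderBdd {E : Type*} [NormedAddCommGroup E] (γ : ℝ) (f : E → ℝ) : Prop :=
  BddAbove (Set.range fun x => |f x|) ∧
  BddAbove (Set.range fun p : E × E => |f p.1 - f p.2| / ‖p.1 - p.2‖ ^ γ)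

/-!
Write `u = K * f`, `v = K * g` through their midpoint `m = (u + v) / 2` and half-difference
`w = (u - v) / 2`, so that `F u - F v = F (m + w) - F (m - w)`. Between two points, moving `w`
costs at most `2 ‖F'‖_∞` times its displacement, and moving `m` costs the increment of the central
difference `τ ↦ F (τ + w) - F (τ - w)`, whose derivative is at most `2 Lip(F') |w|`.
Convolution with `K` multiplies the sup norm and the Hölder seminorm of `f - g` by at most
`‖K‖₁`, while the Hölder seminorm of `K * (f + g)` is at most `[K]_γ ‖f + g‖₁`: this is where
the `L¹` norm of `f + g` enters.
-/

section IncrementBounds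

variable {F : ℝ → ℝ} {M : ℝ} {L : NNReal}

lemma abs_sub_le_of_hasDerivAt {φ φ' : ℝ → ℝ} {C : ℝ} (hφ : ∀ x, HasDerivAt φ (φ' x) x)
    (hC : ∀ x, |φ' x| ≤ C) (a b : ℝ) : |φ a - φ b| ≤ C * |a - b| :=
  convex_univ.norm_image_sub_le_of_norm_hasDerivWithin_le
    (fun x _ => (hφ x).hasDerivWithinAt) (fun x _ => hC x) trivial trivial

lemma abs_central_diff_sub_le (hF : Differentiable ℝ F) (hL : LipschitzWith L (deriv F))
    (m m' t : ℝ) :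
    |(F (m + t) - F (m - t)) - (F (m' + t) - F (m' - t))| ≤ 2 * L * |t| * |m - m'| := by
  refine abs_sub_le_of_hasDerivAt (φ' := fun τ => deriv F (τ + t) - deriv F (τ - t))
    (fun τ => ((hF _).hasDerivAt.comp_add_const τ t).sub ((hF _).hasDerivAt.comp_sub_const τ t))
    (fun τ => ?_) m m'
  calc |deriv F (τ + t) - deriv F (τ - t)| ≤ L * |(τ + t) - (τ - t)| := by
        simpa only [Real.dist_eq] using hL.dist_le_mul (τ + t) (τ - t)
    _ = 2 * L * |t| := by
        rw [show (τ + t) - (τ - t) = 2 * t by ring, abs_mul, abs_two]; ring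

lemma abs_diff_sub_diff_le (hF : Differentiable ℝ F) (hM : ∀ x, |deriv F x| ≤ M)
    (hL : LipschitzWith L (deriv F)) (a b a' b' : ℝ) :
    |(F a - F b) - (F a' - F b')| ≤
      M * |(a - b) - (a' - b')| + L / 2 * |a' - b'| * |(a + b) - (a' + b')| := by
  have hFM := abs_sub_le_of_hasDerivAt (fun x => (hF x).hasDerivAt) hM
  obtain ⟨m, s, rfl, rfl⟩ : ∃ m s, a = m + s ∧ b = m - s :=
    ⟨(a + b) / 2, (a - b) / 2, by ring, by ring⟩
  obtain ⟨m', t, rfl, rfl⟩ : ∃ m' t, a' = m' + t ∧ b' = m' - t :=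
    ⟨(a' + b') / 2, (a' - b') / 2, by ring, by ring⟩
  have hshift : |(F (m + s) - F (m - s)) - (F (m + t) - F (m - t))| ≤ 2 * M * |s - t| :=
    calc _ ≤ |F (m + s) - F (m + t)| + |F (m - s) - F (m - t)| := by
          rw [sub_sub_sub_comm]; exact abs_sub _ _
      _ ≤ M * |s - t| + M * |s - t| := by
          refine add_le_add ((hFM _ _).trans_eq ?_) ((hFM _ _).trans_eq ?_)
          · rw [add_sub_add_left_eq_sub]
          · rw [sub_sub_sub_cancel_left, abs_sub_comm]
      _ = 2 * M * |s - t| := by ring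
  have hmove := abs_central_diff_sub_le hF hL m m' t
  calc _ ≤ |(F (m + s) - F (m - s)) - (F (m + t) - F (m - t))|
        + |(F (m + t) - F (m - t)) - (F (m' + t) - F (m' - t))| := abs_sub_le _ _ _
    _ ≤ 2 * M * |s - t| + 2 * L * |t| * |m - m'| := add_le_add hshift hmove
    _ = _ := by
        rw [show m + s - (m - s) - (m' + t - (m' - t)) = 2 * (s - t) by ring,
          show m' + t - (m' - t) = 2 * t by ring, show m + s + (m - s) - (m' + t + (m' - t)) =
            2 * (m - m') by ring, abs_mul, abs_mul, abs_mul, abs_two]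
        ring

end IncrementBounds

lemma supN_nonneg {E : Type*} (f : E → ℝ) : 0 ≤ supN f :=
  Real.iSup_nonneg fun _ => abs_nonneg _

lemma supN_le {E : Type*} [Nonempty E] {f : E → ℝ} {A : ℝ} (h : ∀ x, |f x| ≤ A) : supN f ≤ A :=
  ciSup_le h

section HolderNorms

variable {E : Type*} [NormedAddCommGroup E] {γ A B : ℝ} {f g : E → ℝ}

lemma holdS_nonneg (γ : ℝ) (f : E → ℝ) : 0 ≤ holdS γ f :=
  Real.iSup_nonneg fun _ => div_nonneg (abs_nonneg _) (rpow_nonneg (norm_nonneg _) _)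

lemma holdS_le [Nonempty E] (hB : 0 ≤ B) (h : ∀ x y, |f x - f y| ≤ B * ‖x - y‖ ^ γ) :
    holdS γ f ≤ B :=
  ciSup_le fun p => div_le_of_le_mul₀ (rpow_nonneg (norm_nonneg _) _) hB (h p.1 p.2)

lemma cNorm_le [Nonempty E] (hA : ∀ x, |f x| ≤ A) (hB : 0 ≤ B)
    (h : ∀ x y, |f x - f y| ≤ B * ‖x - y‖ ^ γ) : cNorm γ f ≤ A + B :=
  add_le_add (supN_le hA) (holdS_le hB h)

lemma isHolderBdd_of_le (hA : ∀ x, |f x| ≤ A) (hB : 0 ≤ B)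
    (h : ∀ x y, |f x - f y| ≤ B * ‖x - y‖ ^ γ) : IsHolderBdd γ f :=
  ⟨⟨A, by rintro _ ⟨x, rfl⟩; exact hA x⟩,
    ⟨B, by
      rintro _ ⟨p, rfl⟩
      exact div_le_of_le_mul₀ (rpow_nonneg (norm_nonneg _) _) hB (h p.1 p.2)⟩⟩

namespace IsHolderBdd

lemma abs_le_supN (hf : IsHolderBdd γ f) (x : E) : |f x| ≤ supN f :=
  le_ciSup hf.1 x

lemma abs_sub_le (hf : IsHolderBdd γ f) (x y : E) :
    |f x - f y| ≤ holdS γ f * ‖x - y‖ ^ γ := by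
  rcases eq_or_ne x y with rfl | hxy
  · simpa using mul_nonneg (holdS_nonneg γ f) (rpow_nonneg (norm_nonneg (x - x)) γ)
  · have hpos : 0 < ‖x - y‖ ^ γ := rpow_pos_of_pos (norm_pos_iff.mpr (sub_ne_zero.mpr hxy)) γ
    exact (div_le_iff₀ hpos).mp (le_ciSup hf.2 (x, y))

lemma sub (hf : IsHolderBdd γ f) (hg : IsHolderBdd γ g) : IsHolderBdd γ (fun x => f x - g x) := by
  refine isHolderBdd_of_le (A := supN f + supN g) (fun x => ?_)
    (add_nonneg (holdS_nonneg γ f) (holdS_nonneg γ g)) fun x y => ?_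
  · exact (abs_sub _ _).trans (add_le_add (hf.abs_le_supN x) (hg.abs_le_supN x))
  · calc |(f x - g x) - (f y - g y)| = |(f x - f y) - (g x - g y)| := by ring_nf
      _ ≤ |f x - f y| + |g x - g y| := abs_sub _ _
      _ ≤ (holdS γ f + holdS γ g) * ‖x - y‖ ^ γ := by
        rw [add_mul]; exact add_le_add (hf.abs_sub_le x y) (hg.abs_sub_le x y)

end IsHolderBdd

lemma cNorm_comp_sub_comp_le [Nonempty E] {F : ℝ → ℝ} {M S H P : ℝ} {L : NNReal}
    (hF : Differentiable ℝ F) (hM : ∀ x, |deriv F x| ≤ M) (hL : LipschitzWith L (deriv F))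
    {u v : E → ℝ} (hS : ∀ x, |u x - v x| ≤ S)
    (hH : ∀ x y, |(u x - v x) - (u y - v y)| ≤ H * ‖x - y‖ ^ γ)
    (hP : ∀ x y, |(u x + v x) - (u y + v y)| ≤ P * ‖x - y‖ ^ γ) (hH0 : 0 ≤ H) (hP0 : 0 ≤ P) :
    cNorm γ (fun x => F (u x) - F (v x)) ≤ M * S + (M * H + L / 2 * S * P) := by
  have hM0 : 0 ≤ M := (abs_nonneg _).trans (hM 0)
  have hS0 : 0 ≤ S := (abs_nonneg _).trans (hS (Classical.arbitrary E))
  have hFM := abs_sub_le_of_hasDerivAt (fun x => (hF x).hasDerivAt) hM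
  refine cNorm_le (fun x => (hFM _ _).trans (by gcongr; exact hS x)) (by positivity)
    fun x y => (abs_diff_sub_diff_le hF hM hL _ _ _ _).trans ?_
  have hr : 0 ≤ ‖x - y‖ ^ γ := rpow_nonneg (norm_nonneg _) _
  calc _ ≤ M * (H * ‖x - y‖ ^ γ) + L / 2 * S * (P * ‖x - y‖ ^ γ) := by
        gcongr
        exacts [hH x y, hS y, hP x y]
    _ = _ := by ring

end HolderNorms

section Convolution

variable {G : Type*} [AddGroup G] [MeasurableSpace G] [MeasurableAdd G] [MeasurableNeg G]
  {μ : Measure G} [μ.IsNegInvariant] [μ.IsAddLeftInvariant] {K h : G → ℝ} {A : ℝ}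

lemma MeasureTheory.Integrable.kernel_mul_of_abs_le (hK : Integrable K μ)
    (hh : AEStronglyMeasurable h μ) (hA : ∀ z, |h z| ≤ A) (x : G) : Integrable (fun z => K (x - z) * h z) μ :=
  (hK.comp_sub_left x).mul_bdd hh (.of_forall hA)

lemma MeasureTheory.Integrable.kernel_mul_of_kernel_abs_le (hK : Integrable K μ)
    (hKA : ∀ z, |K z| ≤ A) (hh : Integrable h μ) (x : G) : Integrable (fun z => K (x - z) * h z) μ :=
  hh.bdd_mul (hK.comp_sub_left x).aestronglyMeasurable (.of_forall fun z => hKA (x - z))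

lemma abs_integral_kernel_mul_le (hK : Integrable K μ) (hh : AEStronglyMeasurable h μ)
    (hA : ∀ z, |h z| ≤ A) (x : G) :
    |∫ z, K (x - z) * h z ∂μ| ≤ (∫ z, |K z| ∂μ) * A :=
  calc |∫ z, K (x - z) * h z ∂μ| ≤ ∫ z, |K (x - z)| * A ∂μ := by
        refine abs_integral_le_integral_abs.trans <| integral_mono
          (hK.kernel_mul_of_abs_le hh hA x).abs ((hK.comp_sub_left x).abs.mul_const A) fun z => ?_
        rw [abs_mul]
        exact mul_le_mul_of_nonneg_left (hA z) (abs_nonneg _)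
    _ = (∫ z, |K z| ∂μ) * A := by
        rw [integral_mul_const, integral_sub_left_eq_self (fun z => |K z|) μ x]

end Convolution

section HolderConvolution

variable {E : Type*} [NormedAddCommGroup E] [MeasurableSpace E] [MeasurableAdd E]
  [MeasurableNeg E] {μ : Measure E} [μ.IsNegInvariant] [μ.IsAddLeftInvariant]
  {K h : E → ℝ} {γ A B : ℝ}

lemma abs_integral_kernel_mul_sub_le_of_holder (hK : Integrable K μ)
    (hh : AEStronglyMeasurable h μ) (hA : ∀ z, |h z| ≤ A)
    (hB : ∀ x y, |h x - h y| ≤ B * ‖x - y‖ ^ γ) (x y : E) :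
    |∫ z, K (x - z) * h z ∂μ - ∫ z, K (y - z) * h z ∂μ| ≤
      (∫ z, |K z| ∂μ) * B * ‖x - y‖ ^ γ := by
  have hswap : ∀ x, ∫ z, K (x - z) * h z ∂μ = ∫ z, K z * h (x - z) ∂μ := fun x => by
    simpa only [sub_sub_cancel] using
      (integral_sub_left_eq_self (fun z => K (x - z) * h z) μ x).symm
  have hint : ∀ x, Integrable (fun z => K z * h (x - z)) μ := fun x => by
    simpa only [sub_sub_cancel] using (hK.kernel_mul_of_abs_le hh hA x).comp_sub_left x
  rw [hswap, hswap, ← integral_sub (hint x) (hint y)]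
  calc |∫ z, (K z * h (x - z) - K z * h (y - z)) ∂μ|
      ≤ ∫ z, |K z| * (B * ‖x - y‖ ^ γ) ∂μ := by
        refine abs_integral_le_integral_abs.trans <| integral_mono
          ((hint x).sub (hint y)).abs (hK.abs.mul_const _) fun z => ?_
        rw [← mul_sub, abs_mul]
        refine mul_le_mul_of_nonneg_left ?_ (abs_nonneg _)
        simpa only [sub_sub_sub_cancel_right] using hB (x - z) (y - z)
    _ = (∫ z, |K z| ∂μ) * B * ‖x - y‖ ^ γ := by rw [integral_mul_const, mul_assoc]

lemma abs_integral_kernel_mul_sub_le_of_kernel_holder (hK : Integrable K μ)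
    (hKA : ∀ z, |K z| ≤ A) (hKB : ∀ x y, |K x - K y| ≤ B * ‖x - y‖ ^ γ)
    (hh : Integrable h μ) (x y : E) :
    |∫ z, K (x - z) * h z ∂μ - ∫ z, K (y - z) * h z ∂μ| ≤
      B * (∫ z, |h z| ∂μ) * ‖x - y‖ ^ γ := by
  have hint := hK.kernel_mul_of_kernel_abs_le hKA hh
  rw [← integral_sub (hint x) (hint y)]
  calc |∫ z, (K (x - z) * h z - K (y - z) * h z) ∂μ|
      ≤ ∫ z, |h z| * (B * ‖x - y‖ ^ γ) ∂μ := by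
        refine abs_integral_le_integral_abs.trans <| integral_mono
          ((hint x).sub (hint y)).abs (hh.abs.mul_const _) fun z => ?_
        rw [← sub_mul, abs_mul, mul_comm]
        refine mul_le_mul_of_nonneg_left ?_ (abs_nonneg _)
        simpa only [sub_sub_sub_cancel_right] using hKB (x - z) (y - z)
    _ = B * (∫ z, |h z| ∂μ) * ‖x - y‖ ^ γ := by rw [integral_mul_const]; ring

lemma cNorm_comp_conv_sub_comp_conv_le [Nonempty E] {F : ℝ → ℝ} {M : ℝ} {L : NNReal}
    (hF : Differentiable ℝ F) (hM : ∀ x, |deriv F x| ≤ M) (hL : LipschitzWith L (deriv F))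
    (hK : Integrable K μ) (hKH : IsHolderBdd γ K) {f g : E → ℝ} (hf : IsHolderBdd γ f)
    (hg : IsHolderBdd γ g) (hfi : Integrable f μ) (hgi : Integrable g μ) :
    cNorm γ (fun x => F (∫ z, K (x - z) * f z ∂μ) - F (∫ z, K (x - z) * g z ∂μ)) ≤
      (∫ z, |K z| ∂μ) * (M * cNorm γ (fun x => f x - g x) +
        L / 2 * holdS γ K * (supN fun x => f x - g x) * ∫ x, |f x + g x| ∂μ) := by
  have hfg := hf.sub hg
  have hint : ∀ {h : E → ℝ}, IsHolderBdd γ h → Integrable h μ → ∀ x,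
      Integrable (fun z => K (x - z) * h z) μ := fun hh hi =>
    hK.kernel_mul_of_abs_le hi.aestronglyMeasurable hh.abs_le_supN
  have hsub : ∀ x, ∫ z, K (x - z) * f z ∂μ - ∫ z, K (x - z) * g z ∂μ =
      ∫ z, K (x - z) * (f z - g z) ∂μ := fun x => by
    simp_rw [mul_sub]; exact (integral_sub (hint hf hfi x) (hint hg hgi x)).symm
  have hadd : ∀ x, ∫ z, K (x - z) * f z ∂μ + ∫ z, K (x - z) * g z ∂μ =
      ∫ z, K (x - z) * (f z + g z) ∂μ := fun x => by
    simp_rw [mul_add]; exact (integral_add (hint hf hfi x) (hint hg hgi x)).symm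
  refine (cNorm_comp_sub_comp_le hF hM hL (S := (∫ z, |K z| ∂μ) * supN fun x => f x - g x)
    (H := (∫ z, |K z| ∂μ) * holdS γ fun x => f x - g x) (P := holdS γ K * ∫ x, |f x + g x| ∂μ)
    (fun x => ?_) (fun x y => ?_) (fun x y => ?_) (mul_nonneg ?_ (holdS_nonneg γ _))
    (mul_nonneg (holdS_nonneg γ K) (integral_nonneg fun _ => abs_nonneg _))).trans_eq ?_
  · rw [hsub]
    exact abs_integral_kernel_mul_le hK (hfi.sub hgi).aestronglyMeasurable hfg.abs_le_supN x
  · rw [hsub, hsub]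
    exact abs_integral_kernel_mul_sub_le_of_holder hK (hfi.sub hgi).aestronglyMeasurable
      hfg.abs_le_supN hfg.abs_sub_le x y
  · rw [hadd, hadd]
    exact abs_integral_kernel_mul_sub_le_of_kernel_holder hK hKH.abs_le_supN hKH.abs_sub_le
      (hfi.add hgi) x y
  · exact integral_nonneg fun _ => abs_nonneg _
  · rw [cNorm]; ring

end HolderConvolution

theorem stmt4_general {d : ℕ} (γ : ℝ)
    (K : Euc d → ℝ) (hKint : Integrable K)
    (hKH : IsHolderBdd γ K)
    (F : ℝ → ℝ) (hF : ContDiff ℝ 1 F) (M : ℝ) (hM : ∀ x, |deriv F x| ≤ M)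
    (L : NNReal) (hL : LipschitzWith L (deriv F)) :
    ∃ C > 0, ∀ f g : Euc d → ℝ,
      IsHolderBdd γ f → IsHolderBdd γ g → Integrable f → Integrable g →
      cNorm γ (fun x => F (∫ z, K (x - z) * f z) - F (∫ z, K (x - z) * g z)) ≤
        C * (1 + ∫ x, |f x + g x|) * cNorm γ (fun x => f x - g x) := by
  have hM0 : 0 ≤ M := (abs_nonneg _).trans (hM 0)
  have hκ : 0 ≤ ∫ z, |K z| := integral_nonneg fun _ => abs_nonneg _
  have hKL : 0 ≤ L * holdS γ K := mul_nonneg L.coe_nonneg (holdS_nonneg γ K)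
  refine ⟨(M + L * holdS γ K) * (∫ z, |K z|) + 1, by positivity, fun f g hf hg hfi hgi => ?_⟩
  refine (cNorm_comp_conv_sub_comp_conv_le (hF.differentiable one_ne_zero) hM hL hKint hKH
    hf hg hfi hgi).trans ?_
  have hs := supN_nonneg fun x => f x - g x
  have hh := holdS_nonneg γ fun x => f x - g x
  have hI : 0 ≤ ∫ x, |f x + g x| := integral_nonneg fun _ => abs_nonneg _
  have hKLκ := mul_nonneg hKL hκ
  rw [cNorm]
  linarith [mul_nonneg hKLκ (mul_nonneg hI hs), mul_nonneg hKLκ (mul_nonneg hI hh),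
    mul_nonneg (mul_nonneg hM0 hκ) (mul_nonneg hI (add_nonneg hs hh)),
    mul_nonneg hKLκ (add_nonneg hs hh), mul_nonneg hI (add_nonneg hs hh)]

/-- Lipschitz estimate for f ↦ F(K*f) in the Hölder–Zygmund norm
with constant depending on the L¹ norm of f+g. -/
theorem stmt4 {d : ℕ} (γ : ℝ) (hγ : γ ∈ Set.Ioo (0:ℝ) 1)
    (K : Euc d → ℝ) (hK0 : ∀ x, 0 ≤ K x) (hKint : Integrable K)
    (hK1 : (∫ x, K x) = 1) (hKH : IsHolderBdd γ K)
    (F : ℝ → ℝ) (hF : ContDiff ℝ 1 F) (M : ℝ) (hM : ∀ x, |deriv F x| ≤ M)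
    (L : NNReal) (hL : LipschitzWith L (deriv F)) :
    ∃ C > 0, ∀ f g : Euc d → ℝ,
      IsHolderBdd γ f → IsHolderBdd γ g → Integrable f → Integrable g →
      cNorm γ (fun x => F (∫ z, K (x - z) * f z) - F (∫ z, K (x - z) * g z)) ≤
        C * (1 + ∫ x, |f x + g x|) * cNorm γ (fun x => f x - g x) :=
  stmt4_general γ K hKint hKH F hF M hM L hL
end

section
/- (Generalized Gronwall with Mittag-Leffler bound, application.) Let θ ∈ (0,1), a ≥ 0, b ≥ 0, and u : [0,T] → [0,∞) be continuous satisfying u(t) ≤ a + b ∫₀ᵗ (t−s)^{−θ} u(s) ds for all t ∈ [0,T]. Then u(t) ≤ a · E_{1−θ}(b Γ(1−θ) t^{1−θ}) for all t ∈ [0,T], where E_α(x) = Σ_{k≥0} x^k / Γ(αk + 1) is the Mittag-Leffler function. In particular, if a = 0 then u ≡ 0. -/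
open MeasureTheory Real Filter
open Topology

lemma realBeta (p q : ℝ) (hp : 0 < p) (hq : 0 < q) :
    ∫ x in (0:ℝ)..1, x ^ (p-1) * (1-x) ^ (q-1) = Gamma p * Gamma q / Gamma (p+q) := by
  have hpq : 0 < Gamma (p+q) := Gamma_pos_of_pos (by linarith)
  rw [eq_div_iff hpq.ne']
  have h := Complex.Gamma_mul_Gamma_eq_betaIntegral (s := (p:ℂ)) (t := (q:ℂ))
    (by simpa using hp) (by simpa using hq)
  have hbeta : Complex.betaIntegral p q =
      ((∫ x in (0:ℝ)..1, x ^ (p-1) * (1-x) ^ (q-1) : ℝ) : ℂ) := by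
    rw [Complex.betaIntegral, ← intervalIntegral.integral_ofReal]
    refine intervalIntegral.integral_congr fun x hx => ?_
    rw [Set.uIcc_of_le (by norm_num : (0:ℝ) ≤ 1)] at hx
    rw [Complex.ofReal_mul, Complex.ofReal_cpow hx.1, Complex.ofReal_cpow (by linarith [hx.2] : (0:ℝ) ≤ 1 - x)]
    push_cast; ring
  rw [hbeta, ← Complex.ofReal_add, Complex.Gamma_ofReal, Complex.Gamma_ofReal,
    Complex.Gamma_ofReal, ← Complex.ofReal_mul, ← Complex.ofReal_mul] at h
  have h' : Gamma p * Gamma q = Gamma (p+q) * ∫ x in (0:ℝ)..1, x ^ (p-1) * (1-x) ^ (q-1) := by exact_mod_cast h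
  linarith


lemma intInt {θ t : ℝ} (hθ : θ < 1) (ht : 0 ≤ t) {g : ℝ → ℝ}
    (hg : ContinuousOn g (Set.Icc 0 t)) :
    IntervalIntegrable (fun s => (t - s) ^ (-θ) * g s) volume 0 t := by
  have h1 : IntervalIntegrable (fun x : ℝ => x ^ (-θ)) volume 0 t :=
    intervalIntegral.intervalIntegrable_rpow' (by linarith)
  have h2 := h1.comp_sub_left t
  simp only [sub_self, sub_zero] at h2
  have h3 : IntervalIntegrable (fun s => (t - s) ^ (-θ)) volume 0 t := h2.symm
  exact h3.mul_continuousOn (by rwa [Set.uIcc_of_le ht])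

lemma contOn_rpow {β : ℝ} (hβ : 0 ≤ β) (s : Set ℝ) : ContinuousOn (fun x : ℝ => x ^ β) s :=
  (Real.continuous_rpow_const hβ).continuousOn

lemma keyInt {θ β t : ℝ} (hθ0 : 0 < θ) (hθ : θ < 1) (hβ : 0 ≤ β) (ht : 0 < t) :
    ∫ s in (0:ℝ)..t, (t - s) ^ (-θ) * s ^ β
      = Gamma (β+1) * Gamma (1-θ) / Gamma (β+1+(1-θ)) * t ^ (β + (1-θ)) := by
  have hsub : ∫ x in (0:ℝ)..1, (fun s => (t - s) ^ (-θ) * s ^ β) (x * t)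
      = t⁻¹ • ∫ x in (0:ℝ)*t..1*t, (t - x) ^ (-θ) * x ^ β :=
    intervalIntegral.integral_comp_mul_right (a:=0) (b:=1) (fun s => (t - s) ^ (-θ) * s ^ β) ht.ne'
  simp only [zero_mul, one_mul] at hsub
  have h2 : ∫ s in (0:ℝ)..t, (t - s) ^ (-θ) * s ^ β
      = t * ∫ x in (0:ℝ)..1, (t - x * t) ^ (-θ) * (x * t) ^ β := by
    rw [hsub, smul_eq_mul, ← mul_assoc, mul_inv_cancel₀ ht.ne', one_mul]
  rw [h2]
  have h3 : ∫ x in (0:ℝ)..1, (t - x * t) ^ (-θ) * (x * t) ^ β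
      = (t ^ β * t ^ (-θ)) * ∫ x in (0:ℝ)..1, x ^ ((β+1)-1) * (1-x) ^ ((1-θ)-1) := by
    rw [← intervalIntegral.integral_const_mul]
    refine intervalIntegral.integral_congr fun x hx => ?_
    rw [Set.uIcc_of_le (by norm_num : (0:ℝ) ≤ 1)] at hx
    have h1x : (0:ℝ) ≤ 1 - x := by linarith [hx.2]
    have : t - x * t = (1 - x) * t := by ring
    rw [this, mul_rpow h1x ht.le, mul_rpow hx.1 ht.le]
    have e1 : (β+1)-1 = β := by ring
    have e2 : (1-θ)-1 = -θ := by ring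
    rw [e1, e2]; ring
  rw [h3, realBeta (β+1) (1-θ) (by linarith) (by linarith)]
  rw [show β + (1-θ) = β + 1 + -θ + 0 by ring, rpow_add ht, rpow_add ht, rpow_zero,
    rpow_add ht, rpow_one]
  ring


lemma gammaLB {α x : ℝ} (hα0 : 0 < α) (hα1 : α ≤ 1) (hx : 0 < x) :
    x * Gamma x ≤ Gamma (x + α) * (x + α) ^ (1 - α) := by
  have hxα : 0 < x + α := by linarith
  have hxα1 : 0 < x + α + 1 := by linarith
  have hc := Real.convexOn_log_Gamma.2 (Set.mem_Ioi.mpr hxα) (Set.mem_Ioi.mpr hxα1)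
    hα0.le (by linarith : (0:ℝ) ≤ 1 - α) (by ring)
  simp only [smul_eq_mul, Function.comp_apply] at hc
  have harg : α * (x + α) + (1 - α) * (x + α + 1) = x + 1 := by ring
  rw [harg] at hc
  have hΓx : 0 < Gamma x := Gamma_pos_of_pos hx
  have hΓxα : 0 < Gamma (x + α) := Gamma_pos_of_pos hxα
  rw [Real.Gamma_add_one hx.ne', Real.Gamma_add_one hxα.ne'] at hc
  rw [Real.log_mul hx.ne' hΓx.ne', Real.log_mul hxα.ne' hΓxα.ne'] at hc
  have h2 : Real.log (x * Gamma x) ≤ Real.log (Gamma (x + α) * (x + α) ^ (1 - α)) := by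
    rw [Real.log_mul hx.ne' hΓx.ne',
      Real.log_mul hΓxα.ne' (rpow_pos_of_pos hxα _).ne', Real.log_rpow hxα]
    nlinarith [hc]
  exact (Real.log_le_log_iff (by positivity) (by positivity)).mp h2

lemma gammaLB2 {α x : ℝ} (hα0 : 0 < α) (hα1 : α ≤ 1) (hx : 1 ≤ x) :
    Gamma x * x ^ α ≤ 2 * Gamma (x + α) := by
  have hx0 : 0 < x := by linarith
  have hc : (0:ℝ) < x ^ (1 - α) := rpow_pos_of_pos hx0 _
  have key : (x + α) ^ (1 - α) ≤ 2 * x ^ (1 - α) := by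
    calc (x + α) ^ (1 - α) ≤ (2 * x) ^ (1 - α) :=
          rpow_le_rpow (by linarith) (by linarith) (by linarith)
      _ = 2 ^ (1 - α) * x ^ (1 - α) := mul_rpow (by norm_num) hx0.le
      _ ≤ 2 * x ^ (1 - α) := by
          have : (2:ℝ) ^ (1 - α) ≤ 2 ^ (1:ℝ) :=
            rpow_le_rpow_of_exponent_le one_le_two (by linarith)
          rw [rpow_one] at this
          exact mul_le_mul_of_nonneg_right this hc.le
  have h1 : Gamma x * x ^ α * x ^ (1 - α) ≤ 2 * Gamma (x + α) * x ^ (1 - α) := by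
    have e : Gamma x * x ^ α * x ^ (1 - α) = x * Gamma x := by
      rw [mul_assoc, ← rpow_add hx0]
      norm_num
      ring
    rw [e]
    calc x * Gamma x ≤ Gamma (x + α) * (x + α) ^ (1 - α) := gammaLB hα0 hα1 hx0
      _ ≤ Gamma (x + α) * (2 * x ^ (1 - α)) :=
          mul_le_mul_of_nonneg_left key (Gamma_pos_of_pos (by linarith)).le
      _ = 2 * Gamma (x + α) * x ^ (1 - α) := by ring
  exact le_of_mul_le_mul_right h1 hc

lemma summableML {α y : ℝ} (hα0 : 0 < α) (hα1 : α ≤ 1) (hy : 0 ≤ y) :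
    Summable (fun k : ℕ => y ^ k / Gamma (α * k + 1)) := by
  apply summable_of_ratio_norm_eventually_le (r := 1/2) (by norm_num)
  have htop : Tendsto (fun k : ℕ => (α * k + 1) ^ α) atTop atTop :=
    (tendsto_rpow_atTop hα0).comp
      (tendsto_atTop_add_const_right _ 1
        ((tendsto_natCast_atTop_atTop).const_mul_atTop hα0))
  filter_upwards [htop.eventually_ge_atTop (4 * y)] with k hk
  set x := α * (k:ℝ) + 1 with hxdef
  have hx1 : 1 ≤ x := by
    have : (0:ℝ) ≤ α * k := by positivity
    simp [hxdef]; linarith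
  have hx0 : 0 < x := by linarith
  have hΓx : 0 < Gamma x := Gamma_pos_of_pos hx0
  have hΓxα : 0 < Gamma (x + α) := Gamma_pos_of_pos (by linarith)
  have key : Gamma x * x ^ α ≤ 2 * Gamma (x + α) := gammaLB2 hα0 hα1 hx1
  have harg : α * ((k:ℝ) + 1) + 1 = x + α := by simp [hxdef]; ring
  rw [Real.norm_eq_abs, Real.norm_eq_abs, abs_of_nonneg (by positivity),
    abs_of_nonneg (by positivity)]
  push_cast [harg]
  have e : 1/2 * (y ^ k / Gamma x) = y ^ k / (2 * Gamma x) := by ring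
  rw [e, div_le_div_iff₀ hΓxα (by positivity)]
  rw [pow_succ]
  nlinarith [mul_le_mul_of_nonneg_left key (pow_nonneg hy k),
    mul_le_mul_of_nonneg_left (mul_le_mul_of_nonneg_right hk hΓx.le) (pow_nonneg hy k),
    pow_nonneg hy k, hΓx.le]


/-- generalized Gronwall lemma with Mittag-Leffler bound. -/
theorem stmt13 (θ : ℝ) (hθ : θ ∈ Set.Ioo (0:ℝ) 1) (T a b : ℝ)
    (hT : 0 < T) (ha : 0 ≤ a) (hb : 0 ≤ b)
    (u : ℝ → ℝ) (hu : ContinuousOn u (Set.Icc 0 T))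
    (hupos : ∀ t ∈ Set.Icc (0:ℝ) T, 0 ≤ u t)
    (hineq : ∀ t ∈ Set.Icc (0:ℝ) T,
      u t ≤ a + b * ∫ s in (0:ℝ)..t, (t - s) ^ (-θ) * u s) :
    (∀ t ∈ Set.Icc (0:ℝ) T,
      u t ≤ a * ∑' k : ℕ,
        (b * Real.Gamma (1 - θ) * t ^ (1 - θ)) ^ k / Real.Gamma ((1 - θ) * k + 1)) ∧
    (a = 0 → ∀ t ∈ Set.Icc (0:ℝ) T, u t = 0) := by
  obtain ⟨hθ0, hθ1⟩ := hθ
  set α := 1 - θ with hαdef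
  have hα0 : 0 < α := by simp [hαdef]; linarith
  have hα1 : α ≤ 1 := by simp [hαdef]; linarith
  have hΓα : 0 < Gamma α := Gamma_pos_of_pos hα0
  obtain ⟨M, hM⟩ := isCompact_Icc.exists_bound_of_continuousOn hu
  have hM' : ∀ t ∈ Set.Icc (0:ℝ) T, u t ≤ M := fun t ht =>
    (le_abs_self _).trans (by simpa using hM t ht)
  have h0T : (0:ℝ) ∈ Set.Icc (0:ℝ) T := ⟨le_refl 0, hT.le⟩
  have hM0 : 0 ≤ M := (hupos 0 h0T).trans (hM' 0 h0T)
  set c : ℕ → ℝ := fun k => (b * Gamma α) ^ k / Gamma (α * k + 1) with hc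
  have hαk : ∀ k : ℕ, (0:ℝ) ≤ α * k := fun k => mul_nonneg hα0.le (Nat.cast_nonneg _)
  have hΓk : ∀ k : ℕ, 0 < Gamma (α * k + 1) := fun k =>
    Gamma_pos_of_pos (by have := hαk k; linarith)
  have hcpos : ∀ k, 0 ≤ c k := fun k =>
    div_nonneg (pow_nonneg (by positivity) k) (hΓk k).le
  have hrec : ∀ k : ℕ, b * (c k * (Gamma (α * k + 1) * Gamma α / Gamma (α * k + 1 + α)))
      = c (k + 1) := by
    intro k
    have e : α * ((k:ℕ) + 1 : ℕ) + 1 = α * k + 1 + α := by push_cast; ring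
    rw [hc]
    simp only
    rw [e, pow_succ]
    field_simp
  -- main induction
  have main : ∀ n : ℕ, ∀ t ∈ Set.Icc (0:ℝ) T,
      u t ≤ a * ∑ k ∈ Finset.range n, c k * t ^ (α * k) + M * (c n * t ^ (α * n)) := by
    intro n
    induction n with
    | zero =>
      intro t ht
      have : c 0 = 1 := by simp [hc, Real.Gamma_one]
      simp [this]
      exact hM' t ht
    | succ n ih =>
      intro t ht
      rcases eq_or_lt_of_le ht.1 with h0 | h0
      · -- t = 0
        subst h0
        have hu0 : u 0 ≤ a := by
          have := hineq 0 h0T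
          simpa using this
        have hsum : ∑ k ∈ Finset.range (n+1), c k * (0:ℝ) ^ (α * k) = 1 := by
          rw [Finset.sum_eq_single 0]
          · simp [hc, Real.Gamma_one]
          · intro k hk hk0
            have hkpos : (0:ℝ) < α * k :=
              mul_pos hα0 (by exact_mod_cast Nat.pos_of_ne_zero hk0)
            rw [Real.zero_rpow hkpos.ne']
            ring
          · simp
        have hn1 : (0:ℝ) < α * ((n+1 : ℕ):ℝ) :=
          mul_pos hα0 (by exact_mod_cast Nat.succ_pos n)
        rw [hsum, Real.zero_rpow hn1.ne']
        simpa using hu0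
      · -- 0 < t
        have htT : t ≤ T := ht.2
        have hvcont : ContinuousOn (fun s : ℝ =>
            a * ∑ k ∈ Finset.range n, c k * s ^ (α * k) + M * (c n * s ^ (α * n)))
            (Set.Icc 0 t) := by
          refine ContinuousOn.add ?_ ?_
          · exact continuousOn_const.mul (continuousOn_finset_sum _ fun k _ =>
              continuousOn_const.mul (contOn_rpow (hαk k) _))
          · exact continuousOn_const.mul (continuousOn_const.mul
              (contOn_rpow (hαk n) _))
        have hint_u : IntervalIntegrable (fun s => (t - s) ^ (-θ) * u s) volume 0 t :=
          intInt hθ1 h0.le (hu.mono (Set.Icc_subset_Icc le_rfl htT))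
        have hint_v : IntervalIntegrable (fun s => (t - s) ^ (-θ) *
            (a * ∑ k ∈ Finset.range n, c k * s ^ (α * k) + M * (c n * s ^ (α * n))))
            volume 0 t := intInt hθ1 h0.le hvcont
        have hmono : ∫ s in (0:ℝ)..t, (t - s) ^ (-θ) * u s ≤
            ∫ s in (0:ℝ)..t, (t - s) ^ (-θ) *
              (a * ∑ k ∈ Finset.range n, c k * s ^ (α * k) + M * (c n * s ^ (α * n))) := by
          refine intervalIntegral.integral_mono_on h0.le hint_u hint_v fun s hs => ?_
          exact mul_le_mul_of_nonneg_left (ih s ⟨hs.1, hs.2.trans htT⟩)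
            (Real.rpow_nonneg (by linarith [hs.2]) _)
        have hIk : ∀ β : ℝ, 0 ≤ β →
            IntervalIntegrable (fun s => (t - s) ^ (-θ) * s ^ β) volume 0 t :=
          fun β hβ => intInt hθ1 h0.le (contOn_rpow hβ _)
        have hexpand : (fun s => (t - s) ^ (-θ) *
            (a * ∑ k ∈ Finset.range n, c k * s ^ (α * k) + M * (c n * s ^ (α * n))))
            = fun s => (∑ k ∈ Finset.range n, (a * c k) * ((t - s) ^ (-θ) * s ^ (α * k)))
              + (M * c n) * ((t - s) ^ (-θ) * s ^ (α * n)) := by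
          funext s
          rw [mul_add, Finset.mul_sum, Finset.mul_sum]
          congr 1
          · exact Finset.sum_congr rfl fun k _ => by ring
          · ring
        have hval : ∫ s in (0:ℝ)..t, (t - s) ^ (-θ) *
            (a * ∑ k ∈ Finset.range n, c k * s ^ (α * k) + M * (c n * s ^ (α * n)))
            = (∑ k ∈ Finset.range n, (a * c k) *
                (Gamma (α * k + 1) * Gamma α / Gamma (α * k + 1 + α) * t ^ (α * k + α)))
              + (M * c n) * (Gamma (α * n + 1) * Gamma α / Gamma (α * n + 1 + α)
                  * t ^ (α * n + α)) := by
          have hsum_int : IntervalIntegrable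
              (fun s => ∑ k ∈ Finset.range n, a * c k * ((t - s) ^ (-θ) * s ^ (α * k)))
              volume 0 t := by
            have := IntervalIntegrable.sum (μ := volume) (a := 0) (b := t) (Finset.range n)
              (f := fun k s => a * c k * ((t - s) ^ (-θ) * s ^ (α * (k:ℕ))))
              (fun k _ => ((hIk (α * k) (hαk k)).const_mul _))
            have e : (∑ k ∈ Finset.range n, fun s => a * c k * ((t - s) ^ (-θ) * s ^ (α * (k:ℕ))))
                = fun s => ∑ k ∈ Finset.range n, a * c k * ((t - s) ^ (-θ) * s ^ (α * k)) := by
              funext s; simp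
            rwa [e] at this
          rw [hexpand, intervalIntegral.integral_add hsum_int
            ((hIk (α * n) (hαk n)).const_mul _),
            intervalIntegral.integral_finset_sum
              (fun k _ => ((hIk (α * (k:ℕ)) (hαk k)).const_mul _)),
            intervalIntegral.integral_const_mul]
          congr 1
          · exact Finset.sum_congr rfl fun k _ => by
              rw [intervalIntegral.integral_const_mul, keyInt hθ0 hθ1 (hαk k) h0]
          · rw [keyInt hθ0 hθ1 (hαk n) h0]
        have step : u t ≤ a + b * ((∑ k ∈ Finset.range n, (a * c k) *
                (Gamma (α * k + 1) * Gamma α / Gamma (α * k + 1 + α) * t ^ (α * k + α)))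
              + (M * c n) * (Gamma (α * n + 1) * Gamma α / Gamma (α * n + 1 + α)
                  * t ^ (α * n + α))) := by
          rw [← hval]
          calc u t ≤ a + b * ∫ s in (0:ℝ)..t, (t - s) ^ (-θ) * u s := hineq t ht
            _ ≤ _ := by
              have := mul_le_mul_of_nonneg_left hmono hb
              linarith
        have hEq : b * ((∑ k ∈ Finset.range n, (a * c k) *
                (Gamma (α * k + 1) * Gamma α / Gamma (α * k + 1 + α) * t ^ (α * k + α)))
              + (M * c n) * (Gamma (α * n + 1) * Gamma α / Gamma (α * n + 1 + α)
                  * t ^ (α * n + α)))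
            = a * (∑ k ∈ Finset.range n, c (k+1) * t ^ (α * ((k:ℕ)+1:ℕ)))
              + M * (c (n+1) * t ^ (α * ((n:ℕ)+1:ℕ))) := by
          rw [mul_add, Finset.mul_sum, Finset.mul_sum]
          congr 1
          · refine Finset.sum_congr rfl fun k _ => ?_
            rw [← hrec k, show α * ((k:ℕ)+1:ℕ) = α * k + α by push_cast; ring]
            ring
          · rw [← hrec n, show α * ((n:ℕ)+1:ℕ) = α * n + α by push_cast; ring]
            ring
        rw [hEq] at step
        have hsplit : ∑ k ∈ Finset.range (n+1), c k * t ^ (α * k)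
            = (∑ k ∈ Finset.range n, c (k+1) * t ^ (α * ((k:ℕ)+1:ℕ))) + 1 := by
          rw [Finset.sum_range_succ']
          congr 1
          simp [hc, Real.Gamma_one]
        rw [hsplit]
        push_cast at step ⊢
        linarith
  have part1 : ∀ t ∈ Set.Icc (0:ℝ) T,
      u t ≤ a * ∑' k : ℕ, (b * Gamma α * t ^ α) ^ k / Gamma (α * k + 1) := by
    intro t ht
    set y := b * Gamma α * t ^ α with hy
    have hy0 : 0 ≤ y :=
      mul_nonneg (mul_nonneg hb hΓα.le) (Real.rpow_nonneg ht.1 α)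
    have hterm : ∀ k : ℕ, c k * t ^ (α * k) = y ^ k / Gamma (α * k + 1) := by
      intro k
      rw [hc]
      simp only
      rw [Real.rpow_mul ht.1, Real.rpow_natCast, hy, div_mul_eq_mul_div, ← mul_pow]
    have hsummable : Summable (fun k : ℕ => y ^ k / Gamma (α * k + 1)) :=
      summableML hα0 hα1 hy0
    have hlim : Tendsto (fun n => a * ∑ k ∈ Finset.range n, y ^ k / Gamma (α * k + 1)
        + M * (y ^ n / Gamma (α * n + 1))) atTop
        (𝓝 (a * ∑' k : ℕ, y ^ k / Gamma (α * k + 1) + M * 0)) :=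
      ((hsummable.hasSum.tendsto_sum_nat).const_mul a).add
        (hsummable.tendsto_atTop_zero.const_mul M)
    rw [mul_zero, add_zero] at hlim
    have hbound : ∀ n : ℕ, u t ≤ a * ∑ k ∈ Finset.range n, y ^ k / Gamma (α * k + 1)
        + M * (y ^ n / Gamma (α * n + 1)) := by
      intro n
      have := main n t ht
      rwa [hterm n, Finset.sum_congr rfl fun k _ => hterm k] at this
    exact ge_of_tendsto' hlim hbound
  exact ⟨part1, fun ha0 t ht => le_antisymm (by simpa [ha0] using part1 t ht) (hupos t ht)⟩
end
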